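/- arXiv:2107.14198 — 2 statements merged into one kernel-verified Lean document; each statement's English description precedes it below -/
import Mathlib

section
/- Let A be an involutive residuated lattice and τ a conucleus on A. Then τ satisfies x·y = τ(x)·y ∨ x·τ(y) for all x,y if and only if it satisfies x\y = (τ(x)\y) ∧ (∼x/τ(∼y)) for all x,y (equivalently, x\y = (τ(x)\y) ∧ (x\∼τ(∼y)), and the mirror-image identities for /). Moreover, in this case the element τ(∼e) is cyclic in the conucleus image A_τ, i.e. τ(x)\_τ τ(∼e) = τ(∼e)/_τ τ(x) for all x ∈ A. -/
/-- A residuated lattice: a lattice with a monoid operation and residuals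
`ldiv x z` (i.e. `x \ z`) and `rdiv z y` (i.e. `z / y`) satisfying the
residuation law `x * y ≤ z ↔ y ≤ x \ z ↔ x ≤ z / y`. -/
class ResiduatedLattice (α : Type*) extends Lattice α, Monoid α where
  ldiv : α → α → α
  rdiv : α → α → α
  ldiv_adj : ∀ {x y z : α}, x * y ≤ z ↔ y ≤ ldiv x z
  rdiv_adj : ∀ {x y z : α}, x * y ≤ z ↔ x ≤ rdiv z y

open ResiduatedLattice

variable {α : Type*} [ResiduatedLattice α]

/-- Involution on the full twist structure: `∼(a,b) = (b,a)`. -/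
def tneg (p : α × α) : α × α := (p.2, p.1)

/-- Join of the twist structure `L × L^∂`. -/
def tjoin (p q : α × α) : α × α := (p.1 ⊔ q.1, p.2 ⊓ q.2)

/-- Meet of the twist structure `L × L^∂`. -/
def tmeet (p q : α × α) : α × α := (p.1 ⊓ q.1, p.2 ⊔ q.2)

/-- Order of the twist structure `L × L^∂`. -/
def tle (p q : α × α) : Prop := p.1 ≤ q.1 ∧ q.2 ≤ p.2

/-- Multiplication of the twist structure:
`(a,b)·(a′,b′) = (a·a′, b′/a ∧ a′\b)`. -/
def tmul (p q : α × α) : α × α := (p.1 * q.1, rdiv q.2 p.1 ⊓ ldiv q.1 p.2)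

/-- Left division of the twist structure:
`(a,b)\(a′,b′) = (a\a′ ∧ b/b′, b′·a)`. -/
def tld (p q : α × α) : α × α := (ldiv p.1 q.1 ⊓ rdiv p.2 q.2, q.2 * p.1)

/-- Right division of the twist structure:
`(a′,b′)/(a,b) = (a′/a ∧ b′\b, a·b′)`. -/
def trd (q p : α × α) : α × α := (rdiv q.1 p.1 ⊓ ldiv q.2 p.2, p.1 * q.2)

/-- A (cyclic) involutive residuated lattice: a residuated lattice with an
involution `∼` satisfying `∼∼x = x` and the contraposition law
`x\∼y = ∼x/y`. -/
class InvResiduatedLattice (β : Type*) extends ResiduatedLattice β where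
  neg : β → β
  neg_neg : ∀ x : β, neg (neg x) = x
  contra : ∀ x y : β, ldiv x (neg y) = rdiv (neg x) y

open InvResiduatedLattice

/-- A conucleus on a residuated lattice (conditions (C1)-(C5)). -/
def IsConucleus {β : Type*} [Lattice β] [Monoid β] (τ : β → β) : Prop :=
  (∀ x, τ x ≤ x) ∧ (∀ x, τ (τ x) = τ x) ∧ (∀ x y, x ≤ y → τ x ≤ τ y) ∧
  (∀ x y, τ x * τ y ≤ τ (x * y)) ∧
  (∀ x, τ 1 * τ x = τ x) ∧ (∀ x, τ x * τ 1 = τ x)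

/-- A Nelson conucleus: a conucleus additionally satisfying
(T1) `τ(x∨y) = τx ∨ τy`, (T2) `τ(x·y) = τx·τy`, and
(T3) `x·y ≤ τx·y ∨ x·τy`. -/
def IsNelsonConucleus {β : Type*} [Lattice β] [Monoid β] (τ : β → β) : Prop :=
  IsConucleus τ ∧
  (∀ x y, τ (x ⊔ y) = τ x ⊔ τ y) ∧
  (∀ x y, τ (x * y) = τ x * τ y) ∧
  (∀ x y, x * y ≤ τ x * y ⊔ x * τ y)

section Aux
variable {α : Type*} [InvResiduatedLattice α]

private lemma rl_nn (x : α) : neg (neg x) = x := InvResiduatedLattice.neg_neg x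

private lemma rl_mul_ldiv_le (x z : α) : x * ldiv x z ≤ z := ldiv_adj.mpr le_rfl
private lemma rl_rdiv_mul_le (z y : α) : rdiv z y * y ≤ z := rdiv_adj.mpr le_rfl

private lemma rl_mul_le_mul_right {a b : α} (h : a ≤ b) (c : α) : a * c ≤ b * c :=
  rdiv_adj.mpr (h.trans (rdiv_adj.mp le_rfl))

private lemma rl_mul_le_mul_left {a b : α} (h : a ≤ b) (c : α) : c * a ≤ c * b :=
  ldiv_adj.mpr (h.trans (ldiv_adj.mp le_rfl))

private lemma rl_mul_sup_le {c a b z : α} (h1 : c * a ≤ z) (h2 : c * b ≤ z) :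
    c * (a ⊔ b) ≤ z :=
  ldiv_adj.mpr (sup_le (ldiv_adj.mp h1) (ldiv_adj.mp h2))

private lemma rl_ldiv_le_ldiv_right {y z : α} (x : α) (h : y ≤ z) :
    ldiv x y ≤ ldiv x z :=
  ldiv_adj.mp ((rl_mul_ldiv_le x y).trans h)

private lemma rl_ldiv_le_ldiv_left {a b : α} (h : a ≤ b) (z : α) :
    ldiv b z ≤ ldiv a z :=
  ldiv_adj.mp ((rl_mul_le_mul_right h _).trans (rl_mul_ldiv_le b z))

private lemma rl_neg_eq_ldiv (x : α) : neg x = ldiv x (neg 1) := by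
  rw [contra x 1]
  refine le_antisymm (rdiv_adj.mp (by rw [mul_one])) ?_
  have h := rl_rdiv_mul_le (neg x) (1 : α)
  rwa [mul_one] at h

private lemma rl_ldiv_eq_rdiv (x y : α) : ldiv x y = rdiv (neg x) (neg y) := by
  have h := contra x (neg y); rwa [rl_nn] at h

private lemma rl_one_ldiv (y : α) : ldiv 1 y = y := by
  refine le_antisymm ?_ (ldiv_adj.mp (by rw [one_mul]))
  have h := rl_mul_ldiv_le (1 : α) y
  rwa [one_mul] at h

private lemma rl_neg_eq_rdiv (x : α) : neg x = rdiv (neg 1) x := by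
  conv_rhs => rw [← rl_nn x]
  rw [← rl_ldiv_eq_rdiv, rl_one_ldiv]

private lemma rl_rdiv_eq_ldiv (y x : α) : rdiv y x = ldiv (neg y) (neg x) := by
  rw [rl_ldiv_eq_rdiv, rl_nn, rl_nn]

private lemma rl_neg_antitone {a b : α} (h : a ≤ b) : neg b ≤ neg a := by
  rw [rl_neg_eq_ldiv a, rl_neg_eq_ldiv b]
  exact rl_ldiv_le_ldiv_left h _

private lemma rl_le_neg_iff {a b : α} : a ≤ neg b ↔ b ≤ neg a := by
  constructor
  · intro h
    have := rl_neg_antitone h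
    rwa [rl_nn] at this
  · intro h
    have := rl_neg_antitone h
    rwa [rl_nn] at this

private lemma rl_le_neg_iff_mul_left {a b : α} : a ≤ neg b ↔ a * b ≤ neg 1 := by
  rw [rl_neg_eq_rdiv b]; exact rdiv_adj.symm

private lemma rl_le_neg_iff_mul_right {a b : α} : a ≤ neg b ↔ b * a ≤ neg 1 := by
  rw [rl_neg_eq_ldiv b]; exact ldiv_adj.symm

private lemma rl_mul_negone_comm {a b : α} : a * b ≤ neg 1 ↔ b * a ≤ neg 1 := by
  rw [← rl_le_neg_iff_mul_left (a := a) (b := b), rl_le_neg_iff,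
    rl_le_neg_iff_mul_left]

private lemma rl_le_ext {x y : α} (h : ∀ c, c ≤ x ↔ c ≤ y) : x = y :=
  le_antisymm ((h x).mp le_rfl) ((h y).mpr le_rfl)

private lemma rl_neg_mul (a b : α) : neg (a * b) = ldiv b (neg a) := by
  apply rl_le_ext; intro c
  rw [rl_le_neg_iff_mul_right, mul_assoc, ← rl_le_neg_iff_mul_right]
  exact ldiv_adj

private lemma rl_neg_sup (a b : α) : neg (a ⊔ b) = neg a ⊓ neg b := by
  apply rl_le_ext; intro c
  constructor
  · intro h
    exact le_inf (h.trans (rl_neg_antitone le_sup_left))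
      (h.trans (rl_neg_antitone le_sup_right))
  · intro h
    rw [rl_le_neg_iff]
    exact sup_le (rl_le_neg_iff.mp (h.trans inf_le_left))
      (rl_le_neg_iff.mp (h.trans inf_le_right))

private lemma rl_p0_to_p2 (τ : α → α) (hco : IsConucleus τ)
    (h0 : ∀ x y : α, x * y = τ x * y ⊔ x * τ y) (x y : α) :
    ldiv x y = ldiv (τ x) y ⊓ ldiv x (neg (τ (neg y))) := by
  obtain ⟨hc1, hc2, hc3, hc4, hc5, hc6⟩ := hco
  apply le_antisymm
  · refine le_inf (rl_ldiv_le_ldiv_left (hc1 x) y) (rl_ldiv_le_ldiv_right x ?_)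
    rw [rl_le_neg_iff]
    exact hc1 (neg y)
  · set u := ldiv (τ x) y ⊓ ldiv x (neg (τ (neg y))) with hu
    refine ldiv_adj.mp ?_
    rw [h0 x u]
    refine sup_le ((rl_mul_le_mul_left inf_le_left _).trans (rl_mul_ldiv_le _ _)) ?_
    have hτu1 : τ u ≤ ldiv (τ x) y := (hc1 u).trans inf_le_left
    have hτu2 : τ u ≤ ldiv x (neg (τ (neg y))) := (hc1 u).trans inf_le_right
    -- show x * τ u ≤ y
    rw [← rl_nn y, rl_le_neg_iff_mul_left, mul_assoc, rl_mul_negone_comm, mul_assoc]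
    have hny : neg y * x ≤ τ (neg y) * x ⊔ neg y * τ x := (h0 (neg y) x).le
    refine le_trans (rl_mul_le_mul_left hny _) (rl_mul_sup_le ?_ ?_)
    · rw [← mul_assoc, rl_mul_negone_comm, ← mul_assoc, ← rl_le_neg_iff_mul_left]
      exact ldiv_adj.mpr hτu2
    · rw [← mul_assoc, rl_mul_negone_comm, ← mul_assoc, ← rl_le_neg_iff_mul_left,
        rl_nn]
      exact ldiv_adj.mpr hτu1

private lemma rl_p2_to_p0 (τ : α → α) (hco : IsConucleus τ)
    (h2 : ∀ x y : α, ldiv x y = ldiv (τ x) y ⊓ ldiv x (neg (τ (neg y)))) (x y : α) :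
    x * y = τ x * y ⊔ x * τ y := by
  obtain ⟨hc1, _, _, _, _, _⟩ := hco
  refine le_antisymm ?_
    (sup_le (rl_mul_le_mul_right (hc1 x) y) (rl_mul_le_mul_left (hc1 y) x))
  refine ldiv_adj.mpr ?_
  rw [h2 x (τ x * y ⊔ x * τ y)]
  refine le_inf (ldiv_adj.mp le_sup_left) (ldiv_adj.mp ?_)
  rw [rl_le_neg_iff]
  have hs : neg (τ x * y ⊔ x * τ y) = neg (x * y) := by
    rw [rl_neg_sup, rl_neg_mul, rl_neg_mul, rl_neg_mul, h2 y (neg x), rl_nn,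
      inf_comm]
  rw [hs]
  exact hc1 _

private lemma rl_cyclic (τ : α → α) (hco : IsConucleus τ) (x : α) :
    τ (ldiv (τ x) (τ (neg 1))) = τ (rdiv (τ (neg 1)) (τ x)) := by
  obtain ⟨hc1, hc2, hc3, hc4, hc5, hc6⟩ := hco
  set d := τ (neg 1) with hd
  have step1 : τ (ldiv (τ x) d) ≤ rdiv d (τ x) := by
    refine rdiv_adj.mp ?_
    have h1 : ldiv (τ x) d * τ x ≤ neg 1 :=
      rl_mul_negone_comm.mp ((rl_mul_ldiv_le (τ x) d).trans (hc1 (neg 1)))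
    calc τ (ldiv (τ x) d) * τ x = τ (ldiv (τ x) d) * τ (τ x) := by rw [hc2]
      _ ≤ τ (ldiv (τ x) d * τ x) := hc4 _ _
      _ ≤ d := hc3 _ _ h1
  have step2 : τ (rdiv d (τ x)) ≤ ldiv (τ x) d := by
    refine ldiv_adj.mp ?_
    have h1 : τ x * rdiv d (τ x) ≤ neg 1 :=
      rl_mul_negone_comm.mp ((rl_rdiv_mul_le d (τ x)).trans (hc1 (neg 1)))
    calc τ x * τ (rdiv d (τ x)) = τ (τ x) * τ (rdiv d (τ x)) := by rw [hc2]
      _ ≤ τ (τ x * rdiv d (τ x)) := hc4 _ _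
      _ ≤ d := hc3 _ _ h1
  refine le_antisymm ?_ ?_
  · have := hc3 _ _ step1
    rwa [hc2] at this
  · have := hc3 _ _ step2
    rwa [hc2] at this

end Aux

/-- for an involutive residuated lattice `A` and a conucleus `τ`
on `A`, the identity (T4) `x·y = τx·y ∨ x·τy` holds iff any one of the four
(mutually equivalent) identities (T5) holds, e.g.
`x\y = (τx\y) ∧ (∼x/τ(∼y))`; and in this case `τ(∼e)` is cyclic in the
conucleus image `A_τ`, i.e. `τ(x) \_τ τ(∼e) = τ(∼e) /_τ τ(x)`. -/


theorem conucleus_T4_iff_T5 {α : Type*} [InvResiduatedLattice α]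
    (τ : α → α) (hco : IsConucleus τ) :
    letI P0 : Prop := ∀ x y : α, x * y = τ x * y ⊔ x * τ y
    letI P1 : Prop := ∀ x y : α,
      ldiv x y = ldiv (τ x) y ⊓ rdiv (InvResiduatedLattice.neg x) (τ (InvResiduatedLattice.neg y))
    letI P2 : Prop := ∀ x y : α,
      ldiv x y = ldiv (τ x) y ⊓ ldiv x (InvResiduatedLattice.neg (τ (InvResiduatedLattice.neg y)))
    letI P3 : Prop := ∀ x y : α,
      rdiv y x = rdiv y (τ x) ⊓ ldiv (τ (InvResiduatedLattice.neg y)) (InvResiduatedLattice.neg x)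
    letI P4 : Prop := ∀ x y : α,
      rdiv y x = rdiv y (τ x) ⊓ rdiv (InvResiduatedLattice.neg (τ (InvResiduatedLattice.neg y))) x
    (P0 ↔ P1) ∧ (P1 ↔ P2) ∧ (P2 ↔ P3) ∧ (P3 ↔ P4) ∧
    (P0 → ∀ x : α,
      τ (ldiv (τ x) (τ (InvResiduatedLattice.neg 1))) =
      τ (rdiv (τ (InvResiduatedLattice.neg 1)) (τ x))) := by
  have h02 : (∀ x y : α, x * y = τ x * y ⊔ x * τ y) ↔
      (∀ x y : α, ldiv x y = ldiv (τ x) y ⊓ ldiv x (neg (τ (neg y)))) :=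
    ⟨fun h => rl_p0_to_p2 τ hco h, fun h => rl_p2_to_p0 τ hco h⟩
  have h12 : (∀ x y : α, ldiv x y = ldiv (τ x) y ⊓ rdiv (neg x) (τ (neg y))) ↔
      (∀ x y : α, ldiv x y = ldiv (τ x) y ⊓ ldiv x (neg (τ (neg y)))) := by
    constructor <;> intro h x y <;> rw [h x y, contra]
  have h23 : (∀ x y : α, ldiv x y = ldiv (τ x) y ⊓ ldiv x (neg (τ (neg y)))) →
      (∀ x y : α, rdiv y x = rdiv y (τ x) ⊓ ldiv (τ (neg y)) (neg x)) := by
    intro h x y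
    rw [rl_rdiv_eq_ldiv y x, h (neg y) (neg x), rl_nn, rl_rdiv_eq_ldiv y (τ x),
      inf_comm]
  have h31 : (∀ x y : α, rdiv y x = rdiv y (τ x) ⊓ ldiv (τ (neg y)) (neg x)) →
      (∀ x y : α, ldiv x y = ldiv (τ x) y ⊓ rdiv (neg x) (τ (neg y))) := by
    intro h x y
    rw [rl_ldiv_eq_rdiv x y, h (neg y) (neg x), rl_nn, rl_nn, inf_comm]
  have h34 : (∀ x y : α, rdiv y x = rdiv y (τ x) ⊓ ldiv (τ (neg y)) (neg x)) ↔
      (∀ x y : α, rdiv y x = rdiv y (τ x) ⊓ rdiv (neg (τ (neg y))) x) := by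
    constructor <;> intro h x y <;> rw [h x y, ← contra]
  refine ⟨h02.trans h12.symm, h12, ⟨h23, fun h => h12.mp (h31 h)⟩, h34,
    fun _ x => rl_cyclic τ hco x⟩
end

section
/- Let A be an involutive residuated lattice and τ a Nelson conucleus on A. Then (x∧e)² ≤ τ(x) for all x. If additionally τ(x) ≤ e for all x, then: (1) (x∧e)² ≤ τ(x) ≤ x∧e for all x; (2) if e ≤ ∼e, then e = ∼e and τ(x) = x∧e for all x; (3) if τ(x)² = τ(x) for all x, then τ(x) = (x∧e)² for all x. -/
open ResiduatedLattice

variable {α : Type*} [ResiduatedLattice α]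

open InvResiduatedLattice

lemma rl_mul_le_mul {β : Type*} [ResiduatedLattice β] {a b c d : β}
    (h1 : a ≤ b) (h2 : c ≤ d) : a * c ≤ b * d := by
  have h3 : b * c ≤ b * d := ldiv_adj.mpr (le_trans h2 (ldiv_adj.mp le_rfl))
  have h4 : a * c ≤ b * c := rdiv_adj.mpr (le_trans h1 (rdiv_adj.mp le_rfl))
  exact le_trans h4 h3

lemma rl_rdiv_one {β : Type*} [ResiduatedLattice β] (z : β) : rdiv z 1 = z := by
  refine le_antisymm ?_ ?_
  · have := rdiv_adj.mpr (le_refl (rdiv z (1 : β)))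
    rwa [mul_one] at this
  · exact rdiv_adj.mp (by rw [mul_one])

open InvResiduatedLattice in
lemma irl_neg_eq {β : Type*} [InvResiduatedLattice β] (x : β) :
    neg x = ldiv x (neg 1) := by rw [contra x 1, rl_rdiv_one]

open InvResiduatedLattice in
lemma irl_mul_le_neg_iff {β : Type*} [InvResiduatedLattice β] {x y : β} :
    x * y ≤ neg 1 ↔ y ≤ neg x := by rw [irl_neg_eq x]; exact ldiv_adj

open InvResiduatedLattice in
/-- for an involutive residuated lattice `A` with Nelson
conucleus `τ`: `(x∧e)² ≤ τ(x)`; and if moreover `τ(x) ≤ e` for all `x`,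
then (1) `(x∧e)² ≤ τ(x) ≤ x∧e`; (2) if `e ≤ ∼e` then `e = ∼e` and
`τ(x) = x∧e`; (3) if `τ(x)² = τ(x)` for all `x` then `τ(x) = (x∧e)²`. -/
theorem conucleus_squeeze {α : Type*} [InvResiduatedLattice α]
    (τ : α → α) (hτ : IsNelsonConucleus τ) :
    (∀ x : α, (x ⊓ 1) * (x ⊓ 1) ≤ τ x) ∧
    ((∀ x : α, τ x ≤ 1) →
      (∀ x : α, (x ⊓ 1) * (x ⊓ 1) ≤ τ x ∧ τ x ≤ x ⊓ 1) ∧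
      ((1 : α) ≤ neg 1 → (1 : α) = neg 1 ∧ ∀ x : α, τ x = x ⊓ 1) ∧
      ((∀ x : α, τ x * τ x = τ x) → ∀ x : α, τ x = (x ⊓ 1) * (x ⊓ 1))) := by
  obtain ⟨⟨hle, _hid, hmono, _hsub, _hl1, _hr1⟩, _hjoin, _hmul, hT3⟩ := hτ
  have sq : ∀ x : α, (x ⊓ 1) * (x ⊓ 1) ≤ τ x := by
    intro x
    set a := x ⊓ 1 with ha
    have h1 : τ a * a ≤ τ a := by
      calc τ a * a ≤ τ a * 1 := rl_mul_le_mul le_rfl inf_le_right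
        _ = τ a := mul_one _
    have h2 : a * τ a ≤ τ a := by
      calc a * τ a ≤ 1 * τ a := rl_mul_le_mul inf_le_right le_rfl
        _ = τ a := one_mul _
    have h3 : a * a ≤ τ a := le_trans (hT3 a a) (sup_le h1 h2)
    exact le_trans h3 (hmono a x inf_le_left)
  refine ⟨sq, fun hub => ⟨fun x => ⟨sq x, le_inf (hle x) (hub x)⟩, ?_, ?_⟩⟩
  · intro h1d
    have hdd : neg 1 * neg 1 ≤ neg (1 : α) := by
      refine le_trans (hT3 (neg 1) (neg 1)) (sup_le ?_ ?_)
      · calc τ (neg 1) * neg 1 ≤ 1 * neg 1 := rl_mul_le_mul (hub _) le_rfl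
          _ = neg 1 := one_mul _
      · calc neg 1 * τ (neg 1) ≤ neg 1 * 1 := rl_mul_le_mul le_rfl (hub _)
          _ = neg 1 := mul_one _
    have hd1 : neg (1 : α) ≤ 1 := by
      have h := irl_mul_le_neg_iff.mp hdd
      rwa [InvResiduatedLattice.neg_neg] at h
    have heq : (1 : α) = neg 1 := le_antisymm h1d hd1
    refine ⟨heq, fun x => ?_⟩
    have hax : x ⊓ 1 ≤ τ (x ⊓ 1) := by
      set a := x ⊓ 1 with ha
      have key : neg (τ a) * a ≤ neg (1 : α) := by
        refine le_trans (hT3 (neg (τ a)) a) (sup_le ?_ ?_)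
        · have h5 : τ (neg (τ a)) * a ≤ 1 * a := rl_mul_le_mul (hub _) le_rfl
          rw [one_mul] at h5
          exact le_trans h5 (le_trans inf_le_right h1d)
        · exact irl_mul_le_neg_iff.mpr (by rw [InvResiduatedLattice.neg_neg])
      have h := irl_mul_le_neg_iff.mp key
      rwa [InvResiduatedLattice.neg_neg] at h
    exact le_antisymm (le_inf (hle x) (hub x))
      (le_trans hax (hmono _ _ inf_le_left))
  · intro hidem x
    refine le_antisymm ?_ (sq x)
    calc τ x = τ x * τ x := (hidem x).symm
      _ ≤ (x ⊓ 1) * (x ⊓ 1) :=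
        rl_mul_le_mul (le_inf (hle x) (hub x)) (le_inf (hle x) (hub x))
end
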